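/- arXiv:2504.20623 — 2 statements merged into one kernel-verified Lean document; each statement's English description precedes it below -/
import Mathlib

section
/- Consider the signal channel model with parameters N, K, σ, μ, r₀, α. For every 1 ≤ k ≤ K, the Pearson correlation coefficient between |g₀|² and |g_k|², namely (E[|g₀|²|g_k|²] − E[|g₀|²]E[|g_k|²]) / √(Var[|g₀|²]·Var[|g_k|²]), equals μ². -/
/-!
Up to the common factor `r₀ ^ (-α) * σ ^ 2`, the gains `|g₀|²` and `|g_k|²` are sums over the
`2N` real coordinates `j` of `U_j ^ 2` and `W_j ^ 2`, where `W_j = √(1 - μ²) V_j + μ U_j` and the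
pairs `(U_j, V_j)` are independent across `j`. Hence covariances add up coordinatewise, and the
correlation is that of a single pair. Since `W_j` is again `N(0, 1/2)`,
`Var U² = Var W² = 2 (1/2)²`, while `Cov(U², W²) = 2 μ² (1/2)²` follows from `E U⁴ = 3 (1/2)²`.
The Gaussian moments are read off from the derivatives of the moment generating function
`exp (v t² / 2)` at `0`.
-/

open MeasureTheory ProbabilityTheory Real Set
open scoped NNReal

namespace ProbabilityTheory

lemma deriv_mul_exp_mul_sq_div_two {p p' : ℝ → ℝ} (v : ℝ) (hp : ∀ t, HasDerivAt p (p' t) t) :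
    deriv (fun t ↦ p t * rexp (v * t ^ 2 / 2)) =
      fun t ↦ (p' t + v * t * p t) * rexp (v * t ^ 2 / 2) := by
  funext t
  have hexp : HasDerivAt (fun t ↦ rexp (v * t ^ 2 / 2)) (rexp (v * t ^ 2 / 2) * (v * t)) t := by
    convert! ((hasDerivAt_pow 2 t).const_mul v |>.div_const 2).exp using 1
    ring
  rw [((hp t).fun_mul hexp).deriv]
  ring

section GaussianMoments

variable {m : ℝ} {v : ℝ≥0}

lemma integral_pow_gaussianReal_eq_iteratedDeriv (n : ℕ) :
    ∫ x, x ^ n ∂gaussianReal 0 v = iteratedDeriv n (fun t ↦ rexp (v * t ^ 2 / 2)) 0 := by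
  have h := iteratedDeriv_mgf_zero (X := fun x ↦ x) (μ := gaussianReal 0 v) (by simp) n
  simpa [mgf_fun_id_gaussianReal] using h.symm

lemma iteratedDeriv_two_exp_mul_sq_div_two (v : ℝ) :
    iteratedDeriv 2 (fun t ↦ rexp (v * t ^ 2 / 2)) =
      fun t ↦ (v + v * t * (v * t)) * rexp (v * t ^ 2 / 2) := by
  have d1 := deriv_mul_exp_mul_sq_div_two (p := fun _ ↦ 1) (p' := fun _ ↦ 0) v
    fun t ↦ hasDerivAt_const t 1
  have d2 := deriv_mul_exp_mul_sq_div_two (p := fun t ↦ v * t) (p' := fun _ ↦ v) v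
    fun t ↦ by simpa using (hasDerivAt_id t).const_mul v
  simp only [one_mul, zero_add, mul_one] at d1
  rw [iteratedDeriv_succ, iteratedDeriv_one, d1, d2]

lemma integral_sq_gaussianReal : ∫ x, x ^ 2 ∂gaussianReal 0 v = v := by
  rw [integral_pow_gaussianReal_eq_iteratedDeriv, iteratedDeriv_two_exp_mul_sq_div_two]
  simp

lemma integral_pow_four_gaussianReal : ∫ x, x ^ 4 ∂gaussianReal 0 v = 3 * (v : ℝ) ^ 2 := by
  have d3 := deriv_mul_exp_mul_sq_div_two (p := fun t ↦ v + v * t * (v * t))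
    (p' := fun t ↦ 2 * v ^ 2 * t) v fun t ↦ by
      convert! ((hasDerivAt_pow 2 t).const_mul ((v : ℝ) ^ 2)).const_add (v : ℝ) using 1 <;> ring_nf
  have d4 := deriv_mul_exp_mul_sq_div_two
    (p := fun t ↦ 2 * v ^ 2 * t + v * t * (v + v * t * (v * t)))
    (p' := fun t ↦ 3 * v ^ 2 + 3 * v ^ 3 * t ^ 2) v fun t ↦ by
      convert! ((hasDerivAt_id' t).const_mul (3 * (v : ℝ) ^ 2)).fun_add
        ((hasDerivAt_pow 3 t).const_mul ((v : ℝ) ^ 3)) using 1 <;> ring_nf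
  rw [integral_pow_gaussianReal_eq_iteratedDeriv, iteratedDeriv_succ, iteratedDeriv_succ,
    iteratedDeriv_two_exp_mul_sq_div_two, d3, d4]
  simp

lemma integrable_pow_gaussianReal (n : ℕ) : Integrable (fun x ↦ x ^ n) (gaussianReal m v) := by
  rcases Nat.eq_zero_or_pos n with rfl | hn
  · simp
  rw [← integrable_norm_iff (by fun_prop)]
  simpa [norm_pow] using (memLp_id_gaussianReal (μ := m) (v := v) n).integrable_norm_pow hn.ne'

end GaussianMoments

section GaussianLaw

variable {Ω : Type*} [MeasurableSpace Ω] {P : Measure Ω} {U V : Ω → ℝ} {m : ℝ} {v w : ℝ≥0}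

lemma integrable_pow_of_hasLaw_gaussianReal (hU : HasLaw U (gaussianReal m v) P) (n : ℕ) :
    Integrable (fun ω ↦ U ω ^ n) P :=
  (integrable_map_measure (continuous_pow n).aestronglyMeasurable hU.aemeasurable).1
    (hU.map_eq ▸ integrable_pow_gaussianReal n)

lemma memLp_pow_of_hasLaw_gaussianReal (hU : HasLaw U (gaussianReal m v) P) (n : ℕ) :
    MemLp (fun ω ↦ U ω ^ n) 2 P :=
  (memLp_two_iff_integrable_sq (hU.aemeasurable.pow_const n).aestronglyMeasurable).2 <| by
    simpa only [← pow_mul] using integrable_pow_of_hasLaw_gaussianReal hU (n * 2)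

lemma HasLaw.integral_pow {ν : Measure ℝ} (hU : HasLaw U ν P) (n : ℕ) :
    ∫ ω, U ω ^ n ∂P = ∫ x, x ^ n ∂ν :=
  hU.integral_comp (f := fun x ↦ x ^ n) (by fun_prop)

lemma hasLaw_mul_add_mul_gaussianReal (hU : HasLaw U (gaussianReal 0 v) P)
    (hV : HasLaw V (gaussianReal 0 w) P) (hUV : IndepFun U V P) (a b : ℝ) :
    HasLaw (fun ω ↦ a * V ω + b * U ω)
      (gaussianReal 0 (.mk (a ^ 2) (sq_nonneg a) * w + .mk (b ^ 2) (sq_nonneg b) * v)) P := by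
  have h := IndepFun.hasLaw_add (gaussianReal_const_mul hV a) (gaussianReal_const_mul hU b)
    (hUV.symm.comp (measurable_const_mul a) (measurable_const_mul b))
  rw [gaussianReal_conv_gaussianReal, mul_zero, mul_zero, add_zero] at h
  exact h

lemma IndepFun.integral_pow_mul_pow (hUV : IndepFun U V P) (hU : AEMeasurable U P)
    (hV : AEMeasurable V P) (i j : ℕ) :
    ∫ ω, U ω ^ i * V ω ^ j ∂P = (∫ ω, U ω ^ i ∂P) * ∫ ω, V ω ^ j ∂P :=
  (hUV.comp (measurable_id.pow_const i) (measurable_id.pow_const j))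
    |>.integral_fun_mul_eq_mul_integral (hU.pow_const i).aestronglyMeasurable
      (hV.pow_const j).aestronglyMeasurable

variable [IsProbabilityMeasure P]

lemma covariance_sq_sq_of_hasLaw_gaussianReal (hU : HasLaw U (gaussianReal 0 v) P) :
    cov[fun ω ↦ U ω ^ 2, fun ω ↦ U ω ^ 2; P] = 2 * (v : ℝ) ^ 2 := by
  have h := covariance_eq_sub (memLp_pow_of_hasLaw_gaussianReal hU 2)
    (memLp_pow_of_hasLaw_gaussianReal hU 2)
  simp only [Pi.mul_apply, ← pow_add] at h
  rw [h, hU.integral_pow, hU.integral_pow, integral_pow_four_gaussianReal,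
    integral_sq_gaussianReal]
  ring

lemma covariance_sq_sq_mul_add_mul_of_hasLaw_gaussianReal (hU : HasLaw U (gaussianReal 0 v) P)
    (hV : HasLaw V (gaussianReal 0 w) P) (hUV : IndepFun U V P) (a b : ℝ) :
    cov[fun ω ↦ U ω ^ 2, fun ω ↦ (a * V ω + b * U ω) ^ 2; P] = 2 * b ^ 2 * (v : ℝ) ^ 2 := by
  have hW := hasLaw_mul_add_mul_gaussianReal hU hV hUV a b
  have hmoment := hUV.integral_pow_mul_pow hU.aemeasurable hV.aemeasurable
  have hint (i j : ℕ) : Integrable (fun ω ↦ U ω ^ i * V ω ^ j) P :=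
    (hUV.comp (measurable_id.pow_const i) (measurable_id.pow_const j)).integrable_mul
      (integrable_pow_of_hasLaw_gaussianReal hU i) (integrable_pow_of_hasLaw_gaussianReal hV j)
  -- every term has the shape `U ^ i * V ^ j`, to which `hmoment` applies
  have hexpand : (fun ω ↦ U ω ^ 2 * (a * V ω + b * U ω) ^ 2) = fun ω ↦
      a ^ 2 * (U ω ^ 2 * V ω ^ 2) +
        (2 * a * b * (U ω ^ 3 * V ω ^ 1) + b ^ 2 * (U ω ^ 4 * V ω ^ 0)) := by
    funext ω; ring
  have h := covariance_eq_sub (memLp_pow_of_hasLaw_gaussianReal hU 2)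
    (memLp_pow_of_hasLaw_gaussianReal hW 2)
  simp only [Pi.mul_apply] at h
  rw [h, hexpand,
    integral_add ((hint 2 2).const_mul _)
      (((hint 3 1).const_mul _).fun_add ((hint 4 0).const_mul _)),
    integral_add ((hint 3 1).const_mul _) ((hint 4 0).const_mul _), integral_const_mul,
    integral_const_mul, integral_const_mul, hmoment, hmoment, hmoment]
  simp only [hU.integral_pow, hV.integral_pow, hW.integral_pow,
    integral_sq_gaussianReal, integral_pow_four_gaussianReal]
  simp only [pow_one, pow_zero, integral_id_gaussianReal, integral_const, probReal_univ,
    NNReal.coe_add, NNReal.coe_mul, NNReal.coe_mk]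
  ring

end GaussianLaw

section Correlation

variable {Ω : Type*} [MeasurableSpace Ω] {P : Measure Ω} {X Y : Ω → ℝ}

noncomputable def correlation (X Y : Ω → ℝ) (P : Measure Ω) : ℝ :=
  cov[X, Y; P] / √(Var[X; P] * Var[Y; P])

lemma correlation_eq_integral [IsProbabilityMeasure P] (hX : MemLp X 2 P) (hY : MemLp Y 2 P) :
    correlation X Y P =
      ((∫ ω, X ω * Y ω ∂P) - (∫ ω, X ω ∂P) * ∫ ω, Y ω ∂P) /
        √(((∫ ω, X ω ^ 2 ∂P) - (∫ ω, X ω ∂P) ^ 2) * ((∫ ω, Y ω ^ 2 ∂P) - (∫ ω, Y ω ∂P) ^ 2)) := by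
  rw [correlation, covariance_eq_sub hX hY, variance_eq_sub hX, variance_eq_sub hY]
  rfl

lemma correlation_const_mul_const_mul {c : ℝ} (hc : c ≠ 0) :
    correlation (fun ω ↦ c * X ω) (fun ω ↦ c * Y ω) P = correlation X Y P := by
  rw [correlation, correlation, covariance_const_mul_left, covariance_const_mul_right,
    variance_const_mul, variance_const_mul,
    show c ^ 2 * Var[X; P] * (c ^ 2 * Var[Y; P]) = (c ^ 2) ^ 2 * (Var[X; P] * Var[Y; P]) by ring,
    Real.sqrt_mul (by positivity), Real.sqrt_sq (by positivity), ← mul_assoc, ← sq,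
    mul_div_mul_left _ _ (by positivity)]

lemma covariance_fun_sum_comp_of_pairwise_indepFun {ι E : Type*} [MeasurableSpace E] [Fintype ι]
    [IsFiniteMeasure P] {T : ι → Ω → E} {f g : E → ℝ} (hf : Measurable f) (hg : Measurable g)
    (hT : Pairwise fun i j ↦ IndepFun (T i) (T j) P)
    (hfT : ∀ i, MemLp (fun ω ↦ f (T i ω)) 2 P) (hgT : ∀ i, MemLp (fun ω ↦ g (T i ω)) 2 P) :
    cov[fun ω ↦ ∑ i, f (T i ω), fun ω ↦ ∑ i, g (T i ω); P] =
      ∑ i, cov[fun ω ↦ f (T i ω), fun ω ↦ g (T i ω); P] := by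
  rw [covariance_fun_sum_fun_sum hfT hgT]
  refine Finset.sum_congr rfl fun i _ ↦ Finset.sum_eq_single i (fun j _ hji ↦ ?_) (by simp)
  exact ((hT hji.symm).comp hf hg).covariance_eq_zero (hfT i) (hgT j)

lemma correlation_fun_sum_comp_of_pairwise_indepFun {ι E : Type*} [MeasurableSpace E] [Fintype ι]
    [Nonempty ι] [IsFiniteMeasure P] {T : ι → Ω → E} {f g : E → ℝ} {a b d : ℝ}
    (hf : Measurable f) (hg : Measurable g) (hT : Pairwise fun i j ↦ IndepFun (T i) (T j) P)
    (hfT : ∀ i, MemLp (fun ω ↦ f (T i ω)) 2 P) (hgT : ∀ i, MemLp (fun ω ↦ g (T i ω)) 2 P)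
    (hff : ∀ i, cov[fun ω ↦ f (T i ω), fun ω ↦ f (T i ω); P] = a)
    (hfg : ∀ i, cov[fun ω ↦ f (T i ω), fun ω ↦ g (T i ω); P] = b)
    (hgg : ∀ i, cov[fun ω ↦ g (T i ω), fun ω ↦ g (T i ω); P] = d) :
    correlation (fun ω ↦ ∑ i, f (T i ω)) (fun ω ↦ ∑ i, g (T i ω)) P = b / √(a * d) := by
  have hX := memLp_finsetSum Finset.univ fun i _ ↦ hfT i
  have hY := memLp_finsetSum Finset.univ fun i _ ↦ hgT i
  have ha : 0 ≤ a := by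
    rw [← hff (Classical.arbitrary ι), covariance_self ((hfT _).aemeasurable)]
    exact variance_nonneg _ _
  have hn : (0 : ℝ) < Fintype.card ι := by exact_mod_cast Fintype.card_pos
  rw [correlation, ← covariance_self hX.aemeasurable, ← covariance_self hY.aemeasurable,
    covariance_fun_sum_comp_of_pairwise_indepFun hf hg hT hfT hgT,
    covariance_fun_sum_comp_of_pairwise_indepFun hf hf hT hfT hfT,
    covariance_fun_sum_comp_of_pairwise_indepFun hg hg hT hgT hgT]
  simp only [hff, hfg, hgg, Finset.sum_const, Finset.card_univ, nsmul_eq_mul]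
  rw [show Fintype.card ι * a * (Fintype.card ι * d) = (Fintype.card ι : ℝ) ^ 2 * (a * d) by ring,
    Real.sqrt_mul (by positivity), Real.sqrt_sq hn.le, mul_div_mul_left _ _ hn.ne']

lemma iIndepFun.pairwise_indepFun_prodMk {κ ι β : Type*} [MeasurableSpace β] {Z : κ → Ω → β}
    (hZ : iIndepFun Z P) (hZm : ∀ p, AEMeasurable (Z p) P) {u u' : ι → κ}
    (hu : Function.Injective u) (hu' : Function.Injective u') (huu' : ∀ i j, u i ≠ u' j) :
    Pairwise fun i j ↦
      IndepFun (fun ω ↦ (Z (u i) ω, Z (u' i) ω)) (fun ω ↦ (Z (u j) ω, Z (u' j) ω)) P :=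
  fun i j hij ↦ hZ.indepFun_prodMk_prodMk₀ hZm _ _ _ _ (hu.ne hij) (huu' i j) (huu' j i).symm
    (hu'.ne hij)

lemma correlation_sum_sq_sum_sq_mul_add_mul [IsProbabilityMeasure P] {ι : Type*} [Fintype ι]
    [Nonempty ι] {U V : ι → Ω → ℝ} {v : ℝ≥0} (hv : v ≠ 0) {s μ : ℝ} (hsμ : s ^ 2 + μ ^ 2 = 1)
    (hU : ∀ j, HasLaw (U j) (gaussianReal 0 v) P) (hV : ∀ j, HasLaw (V j) (gaussianReal 0 v) P)
    (hUV : ∀ j, IndepFun (U j) (V j) P)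
    (hpairs : Pairwise fun i j ↦ IndepFun (fun ω ↦ (U i ω, V i ω)) (fun ω ↦ (U j ω, V j ω)) P) :
    correlation (fun ω ↦ ∑ j, U j ω ^ 2) (fun ω ↦ ∑ j, (s * V j ω + μ * U j ω) ^ 2) P = μ ^ 2 := by
  have hW j := hasLaw_mul_add_mul_gaussianReal (hU j) (hV j) (hUV j) s μ
  rw [correlation_fun_sum_comp_of_pairwise_indepFun (T := fun j ω ↦ (U j ω, V j ω))
      (f := fun q ↦ q.1 ^ 2) (g := fun q ↦ (s * q.2 + μ * q.1) ^ 2) (by fun_prop) (by fun_prop)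
      hpairs (fun j ↦ memLp_pow_of_hasLaw_gaussianReal (hU j) 2)
      (fun j ↦ memLp_pow_of_hasLaw_gaussianReal (hW j) 2)
      (fun j ↦ covariance_sq_sq_of_hasLaw_gaussianReal (hU j))
      (fun j ↦ covariance_sq_sq_mul_add_mul_of_hasLaw_gaussianReal (hU j) (hV j) (hUV j) s μ)
      (fun j ↦ covariance_sq_sq_of_hasLaw_gaussianReal (hW j))]
  have hv' : (v : ℝ) ≠ 0 := by exact_mod_cast hv
  simp only [NNReal.coe_add, NNReal.coe_mul, NNReal.coe_mk, ← add_mul, hsμ, one_mul]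
  rw [Real.sqrt_mul_self (by positivity)]
  field_simp

end Correlation

end ProbabilityTheory

lemma mul_sum_norm_sq_ofReal_add_ofReal_mul_I {N : ℕ} (a σ : ℝ) (x : Fin N × Bool → ℝ) :
    a * ∑ n : Fin N, ‖((σ * x (n, false) : ℝ) : ℂ) + ((σ * x (n, true) : ℝ) : ℂ) * Complex.I‖ ^ 2 =
      a * σ ^ 2 * ∑ j, x j ^ 2 := by
  simp only [Complex.sq_norm, Complex.normSq_add_mul_I, Fintype.sum_prod_type, Fintype.sum_bool,
    Finset.mul_sum]
  exact Finset.sum_congr rfl fun n _ ↦ by ring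

theorem stmt_2_general
    {Ωs : Type*} [MeasurableSpace Ωs] (P : Measure Ωs) [IsProbabilityMeasure P]
    (N K : ℕ) (hN : 1 ≤ N)
    (σ μ r₀ α : ℝ) (hσ : 0 < σ) (hμ : μ ∈ Set.Ioo (0 : ℝ) 1) (hr : 0 < r₀)
    (Z : Fin N × Fin (K + 1) × Bool → Ωs → ℝ)
    (hindep : iIndepFun Z P)
    (hgauss : ∀ p, Measure.map (Z p) P = gaussianReal 0 (1 / 2))
    (h : Fin N → Fin (K + 1) → Ωs → ℂ)
    (hh0 : ∀ n ω, h n 0 ω = Complex.ofReal (σ * Z (n, 0, false) ω) +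
      Complex.ofReal (σ * Z (n, 0, true) ω) * Complex.I)
    (hhk : ∀ n (k : Fin (K + 1)), k ≠ 0 → ∀ ω, h n k ω =
      Complex.ofReal (σ * (Real.sqrt (1 - μ ^ 2) * Z (n, k, false) ω + μ * Z (n, 0, false) ω)) +
      Complex.ofReal (σ * (Real.sqrt (1 - μ ^ 2) * Z (n, k, true) ω + μ * Z (n, 0, true) ω)) *
        Complex.I)
    (gsq : Fin (K + 1) → Ωs → ℝ)
    (hgsq : ∀ k ω, gsq k ω = r₀ ^ (-α) * ∑ n : Fin N, ‖h n k ω‖ ^ 2) :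
    ∀ k : Fin K,
      ((∫ ω, gsq 0 ω * gsq k.succ ω ∂P) - (∫ ω, gsq 0 ω ∂P) * (∫ ω, gsq k.succ ω ∂P)) /
        Real.sqrt (((∫ ω, (gsq 0 ω) ^ 2 ∂P) - (∫ ω, gsq 0 ω ∂P) ^ 2) *
          ((∫ ω, (gsq k.succ ω) ^ 2 ∂P) - (∫ ω, gsq k.succ ω ∂P) ^ 2))
        = μ ^ 2 := by
  intro k
  have hs : √(1 - μ ^ 2) ^ 2 + μ ^ 2 = 1 := by
    rw [Real.sq_sqrt (by nlinarith [hμ.1, hμ.2])]; ring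
  have hc : r₀ ^ (-α) * σ ^ 2 ≠ 0 := by have := Real.rpow_pos_of_pos hr (-α); positivity
  have : Nonempty (Fin N) := ⟨⟨0, hN⟩⟩
  have hlaw (p) : HasLaw (Z p) (gaussianReal 0 (1 / 2)) P :=
    ⟨.of_map_ne_zero (hgauss p ▸ NeZero.ne _), hgauss p⟩
  let U (j : Fin N × Bool) := Z (j.1, 0, j.2)
  let V (j : Fin N × Bool) := Z (j.1, k.succ, j.2)
  have hg0 : gsq 0 = fun ω ↦ r₀ ^ (-α) * σ ^ 2 * ∑ j, U j ω ^ 2 := by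
    funext ω
    simp only [hgsq, hh0]
    exact mul_sum_norm_sq_ofReal_add_ofReal_mul_I _ σ fun j ↦ U j ω
  have hgk : gsq k.succ = fun ω ↦
      r₀ ^ (-α) * σ ^ 2 * ∑ j, (√(1 - μ ^ 2) * V j ω + μ * U j ω) ^ 2 := by
    funext ω
    simp only [hgsq, hhk _ _ (Fin.succ_ne_zero k)]
    exact mul_sum_norm_sq_ofReal_add_ofReal_mul_I _ σ fun j ↦ √(1 - μ ^ 2) * V j ω + μ * U j ω
  have hUV (j) : IndepFun (U j) (V j) P :=
    hindep.indepFun (by simp [Prod.ext_iff, (Fin.succ_ne_zero k).symm])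
  have hpairs := hindep.pairwise_indepFun_prodMk (fun p ↦ (hlaw p).aemeasurable)
    (u := fun j : Fin N × Bool ↦ (j.1, 0, j.2)) (u' := fun j ↦ (j.1, k.succ, j.2))
    (fun i j h ↦ by simpa [Prod.ext_iff] using h) (fun i j h ↦ by simpa [Prod.ext_iff] using h)
    (fun i j ↦ by simp [Prod.ext_iff, (Fin.succ_ne_zero k).symm])
  have hW (j) := hasLaw_mul_add_mul_gaussianReal (hlaw _) (hlaw _) (hUV j) (√(1 - μ ^ 2)) μ
  rw [← correlation_eq_integral
      (hg0 ▸ (memLp_finsetSum _ fun j _ ↦ memLp_pow_of_hasLaw_gaussianReal (hlaw _) 2).const_mul _)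
      (hgk ▸ (memLp_finsetSum _ fun j _ ↦ memLp_pow_of_hasLaw_gaussianReal (hW j) 2).const_mul _),
    hg0, hgk, correlation_const_mul_const_mul hc]
  exact correlation_sum_sq_sum_sq_mul_add_mul (by norm_num) hs (fun _ ↦ hlaw _) (fun _ ↦ hlaw _)
    hUV hpairs

/-- in the correlated signal channel model with MRT precoding, for every
port `1 ≤ k ≤ K`, the Pearson correlation coefficient between `|g₀|²` and `|g_k|²`,
namely `(E[|g₀|²|g_k|²] − E[|g₀|²]E[|g_k|²]) / √(Var[|g₀|²]·Var[|g_k|²])`, equals `μ²`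
(variances written as `E[X²] − E[X]²`). -/
theorem stmt_2
    {Ωs : Type*} [MeasurableSpace Ωs] (P : Measure Ωs) [IsProbabilityMeasure P]
    (N K : ℕ) (hN : 1 ≤ N) (hK : 1 ≤ K)
    (σ μ r₀ α : ℝ) (hσ : 0 < σ) (hμ : μ ∈ Set.Ioo (0 : ℝ) 1) (hr : 0 < r₀) (hα : 0 < α)
    (Z : Fin N × Fin (K + 1) × Bool → Ωs → ℝ)
    (hmeas : ∀ p, Measurable (Z p))
    (hindep : iIndepFun Z P)
    (hgauss : ∀ p, Measure.map (Z p) P = gaussianReal 0 (1 / 2))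
    (h : Fin N → Fin (K + 1) → Ωs → ℂ)
    (hh0 : ∀ n ω, h n 0 ω = Complex.ofReal (σ * Z (n, 0, false) ω) +
      Complex.ofReal (σ * Z (n, 0, true) ω) * Complex.I)
    (hhk : ∀ n (k : Fin (K + 1)), k ≠ 0 → ∀ ω, h n k ω =
      Complex.ofReal (σ * (Real.sqrt (1 - μ ^ 2) * Z (n, k, false) ω + μ * Z (n, 0, false) ω)) +
      Complex.ofReal (σ * (Real.sqrt (1 - μ ^ 2) * Z (n, k, true) ω + μ * Z (n, 0, true) ω)) *
        Complex.I)
    (gsq : Fin (K + 1) → Ωs → ℝ)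
    (hgsq : ∀ k ω, gsq k ω = r₀ ^ (-α) * ∑ n : Fin N, ‖h n k ω‖ ^ 2) :
    ∀ k : Fin K,
      ((∫ ω, gsq 0 ω * gsq k.succ ω ∂P) - (∫ ω, gsq 0 ω ∂P) * (∫ ω, gsq k.succ ω ∂P)) /
        Real.sqrt (((∫ ω, (gsq 0 ω) ^ 2 ∂P) - (∫ ω, gsq 0 ω ∂P) ^ 2) *
          ((∫ ω, (gsq k.succ ω) ^ 2 ∂P) - (∫ ω, gsq k.succ ω ∂P) ^ 2))
        = μ ^ 2 :=
  stmt_2_general P N K hN σ μ r₀ α hσ hμ hr Z hindep hgauss h hh0 hhk gsq hgsq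
end

section
/- For every real Ω ≥ 1, one has (√π/2) · √Ω · Γ(Ω) ≤ Γ(Ω + 1/2), with equality if and only if Ω = 1; equivalently, the ratio (√π/2)·√Ω·Γ(Ω)/Γ(Ω+1/2) attains its maximum value 1 at Ω = 1. Consequently, if X has the Rayleigh density with power parameter σ_I² = σ_s² φ and Y has the Nakagami density with shape Ω and spread φ (with φ > 0, σ_s > 0), then E[X] ≤ σ_s E[Y], i.e., the mean interference magnitude under f-FAMA is at most that under s-FAMA. -/
open MeasureTheory ProbabilityTheory Real Set

/-- The Nakagami density with shape `m` and spread `Ω`. -/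
noncomputable def nakagamiPDF (m Ω τ : ℝ) : ℝ :=
  if 0 < τ then
    2 * m ^ m * τ ^ (2 * m - 1) * Real.exp (-(m * τ ^ 2) / Ω) / (Real.Gamma m * Ω ^ m)
  else 0

/-- The Rayleigh density with power parameter `c`. -/
noncomputable def rayleighPDF (c τ : ℝ) : ℝ :=
  if 0 < τ then 2 * τ / c * Real.exp (-τ ^ 2 / c) else 0

/-!
By the Euler–Gauss limit for `Γ`, the ratio `Γ(x + 1/2)² / (Γ(x) Γ(x + 1))` is the infinite
product of the factors `(x + j)(x + 1 + j) / (x + 1/2 + j)²`, each strictly increasing in `x`;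
hence the ratio is strictly increasing on `(0, ∞)`, and at `x = 1` it equals `π/4`. After
squaring, `(√π/2) √x Γ(x) ≤ Γ(x + 1/2)` holds exactly when `x ≥ 1`, with equality only at
`x = 1`. The Rayleigh density with power `c` is the Nakagami density of shape `1` and spread `c`,
and the Nakagami mean is `Γ(m + 1/2) / Γ(m) · √(Ω/m)`, so the comparison of the means is the
Gamma inequality at `x = Ω`.
-/

open Filter Topology

noncomputable def gammaHalfRatio (x : ℝ) : ℝ := Gamma (x + 1 / 2) ^ 2 / (Gamma x * Gamma (x + 1))

noncomputable def gammaHalfRatioFactor (x : ℝ) (j : ℕ) : ℝ :=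
  (x + j) * (x + 1 + j) / (x + 1 / 2 + j) ^ 2

theorem gammaHalfRatioFactor_pos {x : ℝ} (hx : 0 < x) (j : ℕ) :
    0 < gammaHalfRatioFactor x j := by
  unfold gammaHalfRatioFactor; positivity

theorem gammaHalfRatioFactor_strictMonoOn (j : ℕ) :
    StrictMonoOn (gammaHalfRatioFactor · j) (Ioi 0) := by
  intro x hx y hy hxy
  simp only [mem_Ioi] at hx hy
  unfold gammaHalfRatioFactor
  rw [div_lt_div_iff₀ (by positivity) (by positivity)]
  nlinarith [sq_nonneg (x + y + 1 + 2 * j), (Nat.cast_nonneg j : (0 : ℝ) ≤ j)]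

theorem tendsto_prod_gammaHalfRatioFactor {x : ℝ} (hx : 0 < x) :
    Tendsto (fun n ↦ ∏ j ∈ Finset.range (n + 1), gammaHalfRatioFactor x j) atTop
      (𝓝 (gammaHalfRatio x)) := by
  have hne : Gamma x * Gamma (x + 1) ≠ 0 :=
    (mul_pos (Gamma_pos_of_pos hx) (Gamma_pos_of_pos (by linarith))).ne'
  have H := ((GammaSeq_tendsto_Gamma (x + 1 / 2)).pow 2).div
    ((GammaSeq_tendsto_Gamma x).mul (GammaSeq_tendsto_Gamma (x + 1))) hne
  refine H.congr' ?_
  filter_upwards [eventually_ge_atTop 1] with n hn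
  have hn0 : (0 : ℝ) < n := by exact_mod_cast hn
  have hpos : ∀ a : ℝ, 0 < a → 0 < ∏ j ∈ Finset.range (n + 1), (a + j) := fun a ha ↦
    Finset.prod_pos fun j _ ↦ by positivity
  have hPx := hpos x hx
  have hPh := hpos (x + 1 / 2) (by positivity)
  have hP1 := hpos (x + 1) (by positivity)
  have hr1 : (0 : ℝ) < (n : ℝ) ^ (x + 1 / 2) := rpow_pos_of_pos hn0 _
  have hpow : (n : ℝ) ^ (x + 1 / 2) * (n : ℝ) ^ (x + 1 / 2) =
      (n : ℝ) ^ x * (n : ℝ) ^ (x + 1) := by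
    rw [← rpow_add hn0, ← rpow_add hn0]; ring_nf
  simp only [Pi.div_apply, GammaSeq, gammaHalfRatioFactor, Finset.prod_div_distrib,
    Finset.prod_mul_distrib, Finset.prod_pow]
  generalize (n : ℝ) ^ (x + 1 / 2) = A at hr1 hpow ⊢
  field_simp
  linear_combination hpow

theorem gammaHalfRatio_one : gammaHalfRatio 1 = π / 4 := by
  have h32 : Gamma (1 + 1 / 2) = √π / 2 := by
    rw [show (1 : ℝ) + 1 / 2 = 1 / 2 + 1 by norm_num, Gamma_add_one (by norm_num),
      Gamma_one_half_eq]
    ring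
  rw [gammaHalfRatio, h32, Gamma_add_one one_ne_zero, Gamma_one, div_pow, sq_sqrt pi_nonneg]
  norm_num

theorem gammaHalfRatio_eq_mul_add_one {x : ℝ} (hx : 0 < x) :
    gammaHalfRatio x = gammaHalfRatioFactor x 0 * gammaHalfRatio (x + 1) := by
  simp only [gammaHalfRatio, gammaHalfRatioFactor, CharP.cast_eq_zero, add_zero,
    show x + 1 + 1 / 2 = (x + 1 / 2) + 1 by ring, Gamma_add_one hx.ne',
    Gamma_add_one (by linarith : x + 1 / 2 ≠ 0), Gamma_add_one (by linarith : x + 1 ≠ 0)]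
  field_simp

theorem gammaHalfRatio_monotoneOn : MonotoneOn gammaHalfRatio (Ioi 0) := fun _ hx _ hy hxy ↦
  le_of_tendsto_of_tendsto' (tendsto_prod_gammaHalfRatioFactor hx)
    (tendsto_prod_gammaHalfRatioFactor hy) fun _ ↦
      Finset.prod_le_prod (fun j _ ↦ (gammaHalfRatioFactor_pos hx j).le)
        fun j _ ↦ (gammaHalfRatioFactor_strictMonoOn j).monotoneOn hx hy hxy

-- Strict inequalities are lost in the limit, so the first factor is peeled off.
theorem gammaHalfRatio_strictMonoOn : StrictMonoOn gammaHalfRatio (Ioi 0) := by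
  intro x hx y hy hxy
  have hx0 : 0 < x := hx
  have hy0 : 0 < y := hy
  rw [gammaHalfRatio_eq_mul_add_one hx0, gammaHalfRatio_eq_mul_add_one hy0]
  have hpos : 0 < gammaHalfRatio (x + 1) := by
    unfold gammaHalfRatio
    have := Gamma_pos_of_pos (by linarith : 0 < x + 1 + 1 / 2)
    have := Gamma_pos_of_pos (by linarith : 0 < x + 1)
    have := Gamma_pos_of_pos (by linarith : 0 < x + 1 + 1)
    positivity
  exact mul_lt_mul (gammaHalfRatioFactor_strictMonoOn 0 hx hy hxy)
    (gammaHalfRatio_monotoneOn (by simp only [mem_Ioi]; linarith)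
      (by simp only [mem_Ioi]; linarith) (by linarith)) hpos
    (gammaHalfRatioFactor_pos hy0 0).le

theorem sq_sqrt_pi_div_two_mul_sqrt_mul_Gamma {x : ℝ} (hx : 0 < x) :
    (√π / 2 * √x * Gamma x) ^ 2 = gammaHalfRatio 1 * (Gamma x * Gamma (x + 1)) := by
  rw [gammaHalfRatio_one, Gamma_add_one hx.ne', mul_pow, mul_pow, div_pow, sq_sqrt pi_nonneg,
    sq_sqrt hx.le]
  ring

theorem sq_Gamma_add_half {x : ℝ} (hx : 0 < x) :
    Gamma (x + 1 / 2) ^ 2 = gammaHalfRatio x * (Gamma x * Gamma (x + 1)) :=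
  (div_mul_cancel₀ _ (mul_pos (Gamma_pos_of_pos hx) (Gamma_pos_of_pos (by linarith))).ne').symm

theorem sqrt_pi_div_two_mul_sqrt_mul_Gamma_le_Gamma_add_half_iff {x : ℝ} (hx : 0 < x) :
    √π / 2 * √x * Gamma x ≤ Gamma (x + 1 / 2) ↔ 1 ≤ x := by
  have hc : 0 < Gamma x * Gamma (x + 1) :=
    mul_pos (Gamma_pos_of_pos hx) (Gamma_pos_of_pos (by linarith))
  have hΓ := Gamma_pos_of_pos hx
  rw [← pow_le_pow_iff_left₀ (by positivity) (Gamma_pos_of_pos (by linarith)).le two_ne_zero,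
    sq_sqrt_pi_div_two_mul_sqrt_mul_Gamma hx, sq_Gamma_add_half hx, mul_le_mul_iff_left₀ hc]
  exact gammaHalfRatio_strictMonoOn.le_iff_le (mem_Ioi.2 one_pos) hx

theorem sqrt_pi_div_two_mul_sqrt_mul_Gamma_eq_Gamma_add_half_iff {x : ℝ} (hx : 0 < x) :
    √π / 2 * √x * Gamma x = Gamma (x + 1 / 2) ↔ x = 1 := by
  have hc : 0 < Gamma x * Gamma (x + 1) :=
    mul_pos (Gamma_pos_of_pos hx) (Gamma_pos_of_pos (by linarith))
  have hΓ := Gamma_pos_of_pos hx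
  rw [← pow_left_inj₀ (by positivity) (Gamma_pos_of_pos (by linarith)).le two_ne_zero,
    sq_sqrt_pi_div_two_mul_sqrt_mul_Gamma hx, sq_Gamma_add_half hx, mul_left_inj' hc.ne',
    gammaHalfRatio_strictMonoOn.injOn.eq_iff (mem_Ioi.2 one_pos) hx, eq_comm]

theorem rayleighPDF_eq_nakagamiPDF_one (c : ℝ) : rayleighPDF c = nakagamiPDF 1 c := by
  ext τ
  simp only [rayleighPDF, nakagamiPDF]
  norm_num [div_mul_eq_mul_div]

theorem measurable_nakagamiPDF (m Ω : ℝ) : Measurable (nakagamiPDF m Ω) :=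
  Measurable.ite measurableSet_Ioi (by fun_prop) measurable_const

theorem nakagamiPDF_nonneg {m Ω : ℝ} (hm : 0 < m) (hΩ : 0 < Ω) (τ : ℝ) :
    0 ≤ nakagamiPDF m Ω τ := by
  have := Gamma_pos_of_pos hm
  unfold nakagamiPDF
  split_ifs <;> positivity

theorem integral_eq_integral_mul_of_map_eq_withDensity {Ω' : Type*} [MeasurableSpace Ω']
    {P : Measure Ω'} {X : Ω' → ℝ} (hX : Measurable X) {f : ℝ → ℝ} (hf : Measurable f)
    (hf0 : ∀ τ, 0 ≤ f τ) (hmap : P.map X = volume.withDensity fun τ ↦ ENNReal.ofReal (f τ)) :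
    ∫ ω, X ω ∂P = ∫ τ, f τ * τ := by
  have hmap_id : ∫ ω, X ω ∂P = ∫ τ, τ ∂(P.map X) :=
    (integral_map hX.aemeasurable aestronglyMeasurable_id).symm
  rw [hmap_id, hmap, integral_withDensity_eq_integral_toReal_smul hf.ennreal_ofReal
    (ae_of_all _ fun _ ↦ ENNReal.ofReal_lt_top)]
  simp_rw [ENNReal.toReal_ofReal (hf0 _), smul_eq_mul]

theorem integral_nakagamiPDF_mul_id {m Ω : ℝ} (hm : 0 < m) (hΩ : 0 < Ω) :
    ∫ τ, nakagamiPDF m Ω τ * τ = Gamma (m + 1 / 2) / Gamma m * √(Ω / m) := by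
  have hΓ := Gamma_pos_of_pos hm
  have hIoi : ∫ τ, nakagamiPDF m Ω τ * τ = ∫ τ in Ioi 0, nakagamiPDF m Ω τ * τ :=
    (setIntegral_eq_integral_of_forall_compl_eq_zero fun τ hτ ↦ by
      simp [nakagamiPDF, if_neg (show ¬ 0 < τ from hτ)]).symm
  have hform : ∀ τ ∈ Ioi (0 : ℝ), nakagamiPDF m Ω τ * τ =
      2 * m ^ m / (Gamma m * Ω ^ m) * (τ ^ (2 * m) * exp (-(m / Ω) * τ ^ (2 : ℝ))) := by
    intro τ (hτ : 0 < τ)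
    rw [nakagamiPDF, if_pos hτ, rpow_two, show 2 * m = 2 * m - 1 + 1 by ring,
      rpow_add_one hτ.ne']
    ring_nf
  rw [hIoi, setIntegral_congr_fun measurableSet_Ioi hform, integral_const_mul,
    integral_rpow_mul_exp_neg_mul_rpow two_pos (by linarith) (by positivity)]
  have hpow : (m / Ω) ^ (-(2 * m + 1) / 2) = Ω ^ m / m ^ m * √(Ω / m) := by
    rw [show -(2 * m + 1) / 2 = -(m + 1 / 2) by ring, rpow_neg (by positivity), ← inv_rpow
      (by positivity), inv_div, rpow_add (by positivity), div_rpow hΩ.le hm.le, ← sqrt_eq_rpow]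
  rw [hpow, show (2 * m + 1) / 2 = m + 1 / 2 by ring]
  have := rpow_pos_of_pos hm m
  have := rpow_pos_of_pos hΩ m
  field_simp

theorem integral_rayleighPDF_mul_id {c : ℝ} (hc : 0 < c) :
    ∫ τ, rayleighPDF c τ * τ = √π / 2 * √c := by
  rw [rayleighPDF_eq_nakagamiPDF_one, integral_nakagamiPDF_mul_id one_pos hc,
    show (1 : ℝ) + 1 / 2 = 1 / 2 + 1 by norm_num, Gamma_add_one (by norm_num),
    Gamma_one_half_eq, Gamma_one, div_one, div_one]
  ring

theorem integral_rayleighPDF_mul_id_le_mul_integral_nakagamiPDF_mul_id {m Ω s : ℝ} (hm : 1 ≤ m)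
    (hΩ : 0 < Ω) (hs : 0 < s) :
    ∫ τ, rayleighPDF (s ^ 2 * Ω) τ * τ ≤ s * ∫ τ, nakagamiPDF m Ω τ * τ := by
  have hm0 : 0 < m := one_pos.trans_le hm
  have hΓ := Gamma_pos_of_pos hm0
  have hsqrt := sqrt_pos.2 hm0
  have key := (sqrt_pi_div_two_mul_sqrt_mul_Gamma_le_Gamma_add_half_iff hm0).2 hm
  rw [integral_rayleighPDF_mul_id (by positivity), integral_nakagamiPDF_mul_id hm0 hΩ,
    sqrt_mul (by positivity), sqrt_sq hs.le, sqrt_div' _ hm0.le]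
  calc √π / 2 * (s * √Ω) = s * √Ω / (√m * Gamma m) * (√π / 2 * √m * Gamma m) := by
        field_simp
    _ ≤ s * √Ω / (√m * Gamma m) * Gamma (m + 1 / 2) :=
        mul_le_mul_of_nonneg_left key (by positivity)
    _ = s * (Gamma (m + 1 / 2) / Gamma m * (√Ω / √m)) := by ring

theorem stmt_17_general
    {Ωs : Type*} [MeasurableSpace Ωs] (P : Measure Ωs)
    (Ω φ σs : ℝ) (hΩ : 1 ≤ Ω) (hφ : 0 < φ) (hσs : 0 < σs)
    (X Y : Ωs → ℝ) (hXmeas : Measurable X) (hYmeas : Measurable Y)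
    (hX : Measure.map X P =
      volume.withDensity (fun τ => ENNReal.ofReal (rayleighPDF (σs ^ 2 * φ) τ)))
    (hY : Measure.map Y P =
      volume.withDensity (fun τ => ENNReal.ofReal (nakagamiPDF Ω φ τ))) :
    ((Real.sqrt π / 2) * Real.sqrt Ω * Real.Gamma Ω ≤ Real.Gamma (Ω + 1 / 2)) ∧
    ((Real.sqrt π / 2) * Real.sqrt Ω * Real.Gamma Ω = Real.Gamma (Ω + 1 / 2) ↔ Ω = 1) ∧
    (∫ ω, X ω ∂P ≤ σs * ∫ ω, Y ω ∂P) := by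
  have hΩ0 : 0 < Ω := one_pos.trans_le hΩ
  have hc : 0 < σs ^ 2 * φ := by positivity
  refine ⟨(sqrt_pi_div_two_mul_sqrt_mul_Gamma_le_Gamma_add_half_iff hΩ0).2 hΩ,
    sqrt_pi_div_two_mul_sqrt_mul_Gamma_eq_Gamma_add_half_iff hΩ0, ?_⟩
  rw [rayleighPDF_eq_nakagamiPDF_one] at hX
  rw [integral_eq_integral_mul_of_map_eq_withDensity hXmeas (measurable_nakagamiPDF _ _)
      (nakagamiPDF_nonneg one_pos hc) hX,
    integral_eq_integral_mul_of_map_eq_withDensity hYmeas (measurable_nakagamiPDF _ _)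
      (nakagamiPDF_nonneg hΩ0 hφ) hY, ← rayleighPDF_eq_nakagamiPDF_one]
  exact integral_rayleighPDF_mul_id_le_mul_integral_nakagamiPDF_mul_id hΩ hφ hσs

/-- for every real `Ω ≥ 1`, `(√π/2)·√Ω·Γ(Ω) ≤ Γ(Ω + 1/2)` with equality
iff `Ω = 1`; consequently if `X` is Rayleigh with power parameter `σ_I² = σ_s² φ` and
`Y` is Nakagami with shape `Ω` and spread `φ`, then `E[X] ≤ σ_s E[Y]`. -/
theorem stmt_17
    {Ωs : Type*} [MeasurableSpace Ωs] (P : Measure Ωs) [IsProbabilityMeasure P]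
    (Ω φ σs : ℝ) (hΩ : 1 ≤ Ω) (hφ : 0 < φ) (hσs : 0 < σs)
    (X Y : Ωs → ℝ) (hXmeas : Measurable X) (hYmeas : Measurable Y)
    (hX : Measure.map X P =
      volume.withDensity (fun τ => ENNReal.ofReal (rayleighPDF (σs ^ 2 * φ) τ)))
    (hY : Measure.map Y P =
      volume.withDensity (fun τ => ENNReal.ofReal (nakagamiPDF Ω φ τ))) :
    ((Real.sqrt π / 2) * Real.sqrt Ω * Real.Gamma Ω ≤ Real.Gamma (Ω + 1 / 2)) ∧
    ((Real.sqrt π / 2) * Real.sqrt Ω * Real.Gamma Ω = Real.Gamma (Ω + 1 / 2) ↔ Ω = 1) ∧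
    (∫ ω, X ω ∂P ≤ σs * ∫ ω, Y ω ∂P) :=
  stmt_17_general P Ω φ σs hΩ hφ hσs X Y hXmeas hYmeas hX hY
end
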